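/- Let U ⊆ ℂ be an open set, let h, g : U → ℝ be smooth positive functions, and let A ≥ 0, κ > 0, u > 0 be real numbers. Assume H(g)(z) ≤ A, H(h)(z) ≤ -κ, and h(z) ≥ u·g(z) for all z ∈ U. Then for every real m > A/(κ·u²), one has H(m·h+g)(z) ≤ (A - κ·m·u²)/(1+m·u)² < 0 for all z ∈ U; in particular, for all sufficiently large m the function H(m·h+g) is bounded above on U by a negative constant. -/

import Mathlib

/-- The Laplacian `Δu = ∂²u/∂x² + ∂²u/∂y²` of a function `u : ℂ → ℝ`,
where `ℂ ≅ ℝ²` with directions `1` and `I`. -/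
noncomputable def planeLaplacian (u : ℂ → ℝ) (z : ℂ) : ℝ :=
  fderiv ℝ (fun w => fderiv ℝ u w 1) z 1 +
    fderiv ℝ (fun w => fderiv ℝ u w Complex.I) z Complex.I

/-- The Gaussian curvature `H(g) = -(1/(4g)) Δ(log g)` of the conformal
metric `ds² = 2 g dz dz̄` with density `g`. -/
noncomputable def Hcurv (g : ℂ → ℝ) (z : ℂ) : ℝ :=
  -(1 / (4 * g z)) * planeLaplacian (fun w => Real.log (g w)) z

lemma diff_fderiv_apply {f : ℂ → ℝ} {U : Set ℂ} (hU : IsOpen U)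
    (hf : ContDiffOn ℝ (⊤ : ℕ∞) f U) (v : ℂ) {z : ℂ} (hz : z ∈ U) :
    DifferentiableAt ℝ (fun w => fderiv ℝ f w v) z := by
  have hC : ContDiffAt ℝ (⊤ : ℕ∞) f z := hf.contDiffAt (hU.mem_nhds hz)
  have hC1 : ContDiffAt ℝ 1 (fderiv ℝ f) z := hC.fderiv_right (WithTop.coe_le_coe.mpr le_top)
  exact (hC1.clm_apply contDiffAt_const).differentiableAt one_ne_zero

lemma second_log {f : ℂ → ℝ} {U : Set ℂ} (hU : IsOpen U)
    (hf : ContDiffOn ℝ (⊤ : ℕ∞) f U) (hpos : ∀ z ∈ U, 0 < f z) (v : ℂ) {z : ℂ} (hz : z ∈ U) :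
    fderiv ℝ (fun w => fderiv ℝ (fun x => Real.log (f x)) w v) z v
      = fderiv ℝ (fun w => fderiv ℝ f w v) z v / f z
        - (fderiv ℝ f z v) ^ 2 / (f z) ^ 2 := by
  have hdf : ∀ w ∈ U, DifferentiableAt ℝ f w := fun w hw =>
    (hf.contDiffAt (hU.mem_nhds hw)).differentiableAt (by simp)
  have hev : (fun w => fderiv ℝ (fun x => Real.log (f x)) w v)
      =ᶠ[nhds z] (fun w => (f w)⁻¹ * fderiv ℝ f w v) := by
    filter_upwards [hU.mem_nhds hz] with w hw
    have := ((hdf w hw).hasFDerivAt.log (hpos w hw).ne').fderiv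
    rw [this]; simp
  rw [hev.fderiv_eq]
  have hD := diff_fderiv_apply hU hf v hz
  have hne : f z ≠ 0 := (hpos z hz).ne'
  have hinv : HasFDerivAt (fun w => (f w)⁻¹) ((-((f z) ^ 2)⁻¹) • fderiv ℝ f z) z :=
    (hasDerivAt_inv hne).comp_hasFDerivAt z (hdf z hz).hasFDerivAt
  have hmul := (show HasFDerivAt (fun w => (f w)⁻¹ * fderiv ℝ f w v) _ z from hinv.mul hD.hasFDerivAt)
  rw [hmul.fderiv]
  simp only [ContinuousLinearMap.add_apply, ContinuousLinearMap.smul_apply, smul_eq_mul]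
  field_simp
  ring

lemma laplacian_log {f : ℂ → ℝ} {U : Set ℂ} (hU : IsOpen U)
    (hf : ContDiffOn ℝ (⊤ : ℕ∞) f U) (hpos : ∀ z ∈ U, 0 < f z) {z : ℂ} (hz : z ∈ U) :
    planeLaplacian (fun x => Real.log (f x)) z
      = planeLaplacian f z / f z
        - ((fderiv ℝ f z 1) ^ 2 + (fderiv ℝ f z Complex.I) ^ 2) / (f z) ^ 2 := by
  unfold planeLaplacian
  rw [second_log hU hf hpos 1 hz, second_log hU hf hpos Complex.I hz]
  ring

lemma lin_fderiv {h g : ℂ → ℝ} {U : Set ℂ} (hU : IsOpen U)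
    (hh : ContDiffOn ℝ (⊤ : ℕ∞) h U) (hg : ContDiffOn ℝ (⊤ : ℕ∞) g U) (m : ℝ) {z : ℂ} (hz : z ∈ U) :
    fderiv ℝ (fun x => m * h x + g x) z
      = m • fderiv ℝ h z + fderiv ℝ g z := by
  have hdh : DifferentiableAt ℝ h z := (hh.contDiffAt (hU.mem_nhds hz)).differentiableAt (by simp)
  have hdg : DifferentiableAt ℝ g z := (hg.contDiffAt (hU.mem_nhds hz)).differentiableAt (by simp)
  exact ((hdh.hasFDerivAt.const_mul m).add hdg.hasFDerivAt).fderiv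

lemma lin_second {h g : ℂ → ℝ} {U : Set ℂ} (hU : IsOpen U)
    (hh : ContDiffOn ℝ (⊤ : ℕ∞) h U) (hg : ContDiffOn ℝ (⊤ : ℕ∞) g U) (m : ℝ) (v : ℂ) {z : ℂ} (hz : z ∈ U) :
    fderiv ℝ (fun w => fderiv ℝ (fun x => m * h x + g x) w v) z v
      = m * fderiv ℝ (fun w => fderiv ℝ h w v) z v
        + fderiv ℝ (fun w => fderiv ℝ g w v) z v := by
  have hev : (fun w => fderiv ℝ (fun x => m * h x + g x) w v)
      =ᶠ[nhds z] (fun w => m * fderiv ℝ h w v + fderiv ℝ g w v) := by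
    filter_upwards [hU.mem_nhds hz] with w hw
    rw [lin_fderiv hU hh hg m hw]; simp
  rw [hev.fderiv_eq]
  have hDh := diff_fderiv_apply hU hh v hz
  have hDg := diff_fderiv_apply hU hg v hz
  rw [(show HasFDerivAt (fun w => m * fderiv ℝ h w v + fderiv ℝ g w v) _ z from
    (hDh.hasFDerivAt.const_mul m).add hDg.hasFDerivAt).fderiv]
  simp

lemma algebra_key (P Q a1 b1 a2 b2 Lh Lg A κ u m : ℝ)
    (hP : 0 < P) (hQ : 0 < Q) (hm : 0 < m) (hκ : 0 < κ) (hu : 0 < u) (hA : 0 ≤ A)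
    (hPQ : P ≥ u * Q)
    (h1 : -(1 / (4 * P)) * (Lh / P - (a1 ^ 2 + b1 ^ 2) / P ^ 2) ≤ -κ)
    (h2 : -(1 / (4 * Q)) * (Lg / Q - (a2 ^ 2 + b2 ^ 2) / Q ^ 2) ≤ A) :
    -(1 / (4 * (m * P + Q))) *
        ((m * Lh + Lg) / (m * P + Q)
          - ((m * a1 + a2) ^ 2 + (m * b1 + b2) ^ 2) / (m * P + Q) ^ 2)
      ≤ (A - κ * m * u ^ 2) / (1 + m * u) ^ 2 := by
  have hS : 0 < m * P + Q := by nlinarith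
  have e1 : a1 ^ 2 + b1 ^ 2 - Lh * P ≤ -κ * (4 * P ^ 3) := by
    have hr : -(1 / (4 * P)) * (Lh / P - (a1 ^ 2 + b1 ^ 2) / P ^ 2)
        = (a1 ^ 2 + b1 ^ 2 - Lh * P) / (4 * P ^ 3) := by
      field_simp; ring
    rw [hr] at h1
    exact (div_le_iff₀ (by positivity)).mp h1
  have e2 : a2 ^ 2 + b2 ^ 2 - Lg * Q ≤ A * (4 * Q ^ 3) := by
    have hr : -(1 / (4 * Q)) * (Lg / Q - (a2 ^ 2 + b2 ^ 2) / Q ^ 2)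
        = (a2 ^ 2 + b2 ^ 2 - Lg * Q) / (4 * Q ^ 3) := by
      field_simp; ring
    rw [hr] at h2
    exact (div_le_iff₀ (by positivity)).mp h2
  have hr2 : -(1 / (4 * (m * P + Q))) *
        ((m * Lh + Lg) / (m * P + Q)
          - ((m * a1 + a2) ^ 2 + (m * b1 + b2) ^ 2) / (m * P + Q) ^ 2)
      = (((m * a1 + a2) ^ 2 + (m * b1 + b2) ^ 2) - (m * Lh + Lg) * (m * P + Q))
          / (4 * (m * P + Q) ^ 3) := by
    field_simp; ring
  rw [hr2, div_le_div_iff₀ (by positivity) (by positivity)]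
  have c3 : ((m * a1 + a2) ^ 2 + (m * b1 + b2) ^ 2) * (P * Q)
      ≤ (m * P + Q) * (m * (a1 ^ 2 + b1 ^ 2) * Q + (a2 ^ 2 + b2 ^ 2) * P) := by
    nlinarith [mul_nonneg hm.le (sq_nonneg (a2 * P - a1 * Q)),
      mul_nonneg hm.le (sq_nonneg (b2 * P - b1 * Q))]
  have e1' : m * Q * (a1 ^ 2 + b1 ^ 2 - Lh * P) ≤ m * Q * (-κ * (4 * P ^ 3)) :=
    mul_le_mul_of_nonneg_left e1 (by positivity)
  have e2' : P * (a2 ^ 2 + b2 ^ 2 - Lg * Q) ≤ P * (A * (4 * Q ^ 3)) :=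
    mul_le_mul_of_nonneg_left e2 hP.le
  have c4 : m * (a1 ^ 2 + b1 ^ 2) * Q + (a2 ^ 2 + b2 ^ 2) * P
      ≤ P * Q * ((m * Lh + Lg) + 4 * (A * Q ^ 2 - κ * m * P ^ 2)) := by nlinarith [e1', e2']
  have c5 : ((m * a1 + a2) ^ 2 + (m * b1 + b2) ^ 2) * (P * Q)
      ≤ (m * P + Q) * (P * Q * ((m * Lh + Lg) + 4 * (A * Q ^ 2 - κ * m * P ^ 2))) :=
    le_trans c3 (mul_le_mul_of_nonneg_left c4 hS.le)
  have hPQ0 : 0 < P * Q := mul_pos hP hQ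
  have c6 : ((m * a1 + a2) ^ 2 + (m * b1 + b2) ^ 2)
      ≤ (m * P + Q) * ((m * Lh + Lg) + 4 * (A * Q ^ 2 - κ * m * P ^ 2)) := by
    refine le_of_mul_le_mul_right ?_ hPQ0
    have hq : (m * P + Q) * (P * Q * ((m * Lh + Lg) + 4 * (A * Q ^ 2 - κ * m * P ^ 2)))
        = (m * P + Q) * ((m * Lh + Lg) + 4 * (A * Q ^ 2 - κ * m * P ^ 2)) * (P * Q) := by
      ring
    linarith [c5, hq]
  have hPuQ : (0:ℝ) ≤ P - u * Q := by linarith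
  have d1 : 0 ≤ A * (m * ((P - u * Q) * (m * P + 2 * Q + m * u * Q))) :=
    mul_nonneg hA (mul_nonneg hm.le (mul_nonneg hPuQ (by positivity)))
  have d2 : 0 ≤ (κ * m) * ((P - u * Q) * (u * (m * P + Q) + P * (1 + m * u))) :=
    mul_nonneg (by positivity) (mul_nonneg hPuQ (by positivity))
  have cIneq : (A * Q ^ 2 - κ * m * P ^ 2) * (1 + m * u) ^ 2
      ≤ (A - κ * m * u ^ 2) * (m * P + Q) ^ 2 := by
    have hq : (A - κ * m * u ^ 2) * (m * P + Q) ^ 2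
          - (A * Q ^ 2 - κ * m * P ^ 2) * (1 + m * u) ^ 2
        = A * (m * ((P - u * Q) * (m * P + 2 * Q + m * u * Q)))
          + (κ * m) * ((P - u * Q) * (u * (m * P + Q) + P * (1 + m * u))) := by ring
    linarith [d1, d2, hq]
  have cIneq4 := mul_le_mul_of_nonneg_left cIneq (by positivity : (0:ℝ) ≤ 4 * (m * P + Q))
  have final1 : (((m * a1 + a2) ^ 2 + (m * b1 + b2) ^ 2) - (m * Lh + Lg) * (m * P + Q))
        * (1 + m * u) ^ 2
      ≤ 4 * (m * P + Q) * (A * Q ^ 2 - κ * m * P ^ 2) * (1 + m * u) ^ 2 := by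
    have g6 : (((m * a1 + a2) ^ 2 + (m * b1 + b2) ^ 2) - (m * Lh + Lg) * (m * P + Q))
        ≤ 4 * (m * P + Q) * (A * Q ^ 2 - κ * m * P ^ 2) := by
      have hq : (m * P + Q) * ((m * Lh + Lg) + 4 * (A * Q ^ 2 - κ * m * P ^ 2))
          = (m * Lh + Lg) * (m * P + Q)
            + 4 * (m * P + Q) * (A * Q ^ 2 - κ * m * P ^ 2) := by
        ring
      linarith [c6, hq]
    exact mul_le_mul_of_nonneg_right g6 (by positivity)
  have hq1 : 4 * (m * P + Q) * ((A * Q ^ 2 - κ * m * P ^ 2) * (1 + m * u) ^ 2)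
      = 4 * (m * P + Q) * (A * Q ^ 2 - κ * m * P ^ 2) * (1 + m * u) ^ 2 := by ring
  have hq2 : 4 * (m * P + Q) * ((A - κ * m * u ^ 2) * (m * P + Q) ^ 2)
      = (A - κ * m * u ^ 2) * (4 * (m * P + Q) ^ 3) := by ring
  linarith [final1, cIneq4, hq1, hq2]

/-- If `H(g) ≤ A`, `H(h) ≤ -κ` and `h ≥ u·g` on `U`, then for every
`m > A/(κ·u²)` one has `H(m·h+g) ≤ (A - κ·m·u²)/(1+m·u)² < 0` on `U`;
in particular, for all sufficiently large `m` the function `H(m·h+g)` is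
bounded above on `U` by a negative constant. -/
theorem Hcurv_smul_add_neg_pinched (U : Set ℂ) (hU : IsOpen U) (h g : ℂ → ℝ)
    (hh : ContDiffOn ℝ (⊤ : ℕ∞) h U) (hhpos : ∀ z ∈ U, 0 < h z)
    (hg : ContDiffOn ℝ (⊤ : ℕ∞) g U) (hgpos : ∀ z ∈ U, 0 < g z)
    (A κ u : ℝ) (hA : 0 ≤ A) (hκ : 0 < κ) (hu : 0 < u)
    (hHg : ∀ z ∈ U, Hcurv g z ≤ A) (hHh : ∀ z ∈ U, Hcurv h z ≤ -κ)
    (hhg : ∀ z ∈ U, h z ≥ u * g z) :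
    (∀ m : ℝ, m > A / (κ * u ^ 2) →
      ∀ z ∈ U, Hcurv (fun w => m * h w + g w) z ≤ (A - κ * m * u ^ 2) / (1 + m * u) ^ 2
        ∧ (A - κ * m * u ^ 2) / (1 + m * u) ^ 2 < 0)
    ∧ ∀ᶠ m : ℝ in Filter.atTop, ∃ ε : ℝ, 0 < ε ∧
        ∀ z ∈ U, Hcurv (fun w => m * h w + g w) z ≤ -ε := by
  have hu2 : (0:ℝ) < κ * u ^ 2 := by positivity
  have main : ∀ m : ℝ, m > A / (κ * u ^ 2) →
      ∀ z ∈ U, Hcurv (fun w => m * h w + g w) z ≤ (A - κ * m * u ^ 2) / (1 + m * u) ^ 2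
        ∧ (A - κ * m * u ^ 2) / (1 + m * u) ^ 2 < 0 := by
    intro m hm z hz
    have hm0 : 0 < m := lt_of_le_of_lt (div_nonneg hA hu2.le) hm
    have hAm : A < m * (κ * u ^ 2) := (div_lt_iff₀ hu2).mp hm
    have hNeg : A - κ * m * u ^ 2 < 0 := by nlinarith
    have hposdiv : (A - κ * m * u ^ 2) / (1 + m * u) ^ 2 < 0 :=
      div_neg_of_neg_of_pos hNeg (by positivity)
    refine ⟨?_, hposdiv⟩
    have hF : ContDiffOn ℝ (⊤ : ℕ∞) (fun w => m * h w + g w) U := (contDiffOn_const.mul hh).add hg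
    have hFpos : ∀ w ∈ U, 0 < m * h w + g w := fun w hw => by
      have := hhpos w hw; have := hgpos w hw; nlinarith
    have hXh := hHh z hz
    have hXg := hHg z hz
    simp only [Hcurv] at hXh hXg ⊢
    rw [laplacian_log hU hh hhpos hz] at hXh
    rw [laplacian_log hU hg hgpos hz] at hXg
    rw [laplacian_log hU hF hFpos hz]
    have hLap : planeLaplacian (fun x => m * h x + g x) z
        = m * planeLaplacian h z + planeLaplacian g z := by
      unfold planeLaplacian
      rw [lin_second hU hh hg m 1 hz, lin_second hU hh hg m Complex.I hz]
      ring
    have hd : ∀ v : ℂ, fderiv ℝ (fun x => m * h x + g x) z v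
        = m * fderiv ℝ h z v + fderiv ℝ g z v := by
      intro v
      rw [lin_fderiv hU hh hg m hz]; simp
    rw [hLap, hd 1, hd Complex.I]
    exact algebra_key (h z) (g z) (fderiv ℝ h z 1) (fderiv ℝ h z Complex.I)
      (fderiv ℝ g z 1) (fderiv ℝ g z Complex.I) (planeLaplacian h z) (planeLaplacian g z)
      A κ u m (hhpos z hz) (hgpos z hz) hm0 hκ hu hA (hhg z hz) hXh hXg
  refine ⟨main, ?_⟩
  filter_upwards [Filter.eventually_gt_atTop (A / (κ * u ^ 2))] with m hm
  have hm0 : 0 < m := lt_of_le_of_lt (div_nonneg hA hu2.le) hm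
  have hAm : A < m * (κ * u ^ 2) := (div_lt_iff₀ hu2).mp hm
  refine ⟨(κ * m * u ^ 2 - A) / (1 + m * u) ^ 2, div_pos (by nlinarith) (by positivity), ?_⟩
  intro z hz
  have := (main m hm z hz).1
  have hq : -((κ * m * u ^ 2 - A) / (1 + m * u) ^ 2)
      = (A - κ * m * u ^ 2) / (1 + m * u) ^ 2 := by ring
  linarith [this, hq]
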